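/- arXiv:0912.5002 — 6 statements merged into one kernel-verified Lean document; each statement's English description precedes it below -/
import Mathlib

section
/- (Restriction Lemma 1) Let Λ be a finite-dimensional algebra over a field, B a subalgebra of Λ, and M a finite-length Λ-module. Suppose that as a B-module, M = N ⊕ N' where N is an indecomposable non-simple B-submodule and N' is a semisimple B-module, and suppose that the socle of M as a Λ-module equals the socle of N as a B-module (as subspaces of M). Then M is indecomposable as a Λ-module. -/
/-!
Write `M = X ⊕ Y` as `Λ`-modules. The projections onto `X` and `Y` are `B`-linear, so compressing
them to `N` along `N'` gives two endomorphisms of `N` summing to the identity. By Fitting's lemma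
the endomorphism ring of the indecomposable finite-length `B`-module `N` is local, so one of the two
is injective; the compression of the projection onto `X` kills `N ∩ Y`, so `N` meets `Y` (or
symmetrically `X`) trivially. But every simple `Λ`-submodule of `M` lies in its socle, hence in `N`,
and a nonzero summand of the finite-length module `M` contains one.
-/

/-- A module is indecomposable: nonzero and with no nontrivial direct decomposition. -/
def Indec (Λ : Type*) [Ring Λ] (M : Type*) [AddCommGroup M] [Module Λ M] : Prop :=
  Nontrivial M ∧ ∀ A B : Submodule Λ M, IsCompl A B → A = ⊥ ∨ B = ⊥

open Function Submodule

section Indecomposable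

variable {R : Type*} [Ring R]

theorem Indec.injective_or_isNilpotent {N : Type*} [AddCommGroup N] [Module R N]
    [IsNoetherian R N] [IsArtinian R N] (hN : Indec R N) (f : Module.End R N) :
    Injective f ∨ IsNilpotent f := by
  obtain ⟨n, hn⟩ := Filter.eventually_atTop.mp f.eventually_isCompl_ker_pow_range_pow
  rcases hN.2 _ _ (hn (n + 1) n.le_succ) with hker | hrange
  · left
    have hinj : Injective ⇑(f ^ n * f) := by
      rw [← pow_succ]
      exact LinearMap.ker_eq_bot.mp hker
    rw [Module.End.coe_mul] at hinj
    exact hinj.of_comp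
  · exact Or.inr ⟨n + 1, LinearMap.range_eq_bot.mp hrange⟩

theorem Indec.injective_or_injective_of_add_eq_one {N : Type*} [AddCommGroup N] [Module R N]
    [IsNoetherian R N] [IsArtinian R N] (hN : Indec R N) {f g : Module.End R N}
    (hfg : f + g = 1) : Injective f ∨ Injective g := by
  refine (hN.injective_or_isNilpotent f).imp_right fun hf => ?_
  rw [eq_sub_of_add_eq' hfg]
  exact ((Module.End.isUnit_iff _).mp hf.isUnit_one_sub).injective

variable {M : Type*} [AddCommGroup M] [Module R M] {N N' : Submodule R M}

namespace Submodule

noncomputable def compression (hNN' : IsCompl N N') (e : Module.End R M) : Module.End R N :=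
  N.projectionOnto N' hNN' ∘ₗ e ∘ₗ N.subtype

theorem compression_projection_add_compression_projection (hNN' : IsCompl N N')
    {X Y : Submodule R M} (hXY : IsCompl X Y) :
    compression hNN' (X.projection Y hXY) + compression hNN' (Y.projection X hXY.symm) = 1 := by
  simp only [compression, ← LinearMap.comp_add, ← LinearMap.add_comp,
    projection_add_projection_eq_id, LinearMap.id_comp, projectionOnto_comp_subtype]
  rfl

theorem disjoint_of_injective_compression_projection (hNN' : IsCompl N N')
    {X Y : Submodule R M} (hXY : IsCompl X Y)
    (hinj : Injective (compression hNN' (X.projection Y hXY))) : Disjoint N Y := by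
  refine disjoint_def.mpr fun x hxN hxY => ?_
  have hzero : compression hNN' (X.projection Y hXY) ⟨x, hxN⟩ = 0 := by
    simp [compression, projection_apply_of_mem_right hXY hxY]
  simpa using hinj (hzero.trans (map_zero _).symm)

end Submodule

theorem Indec.disjoint_or_disjoint_of_isCompl [IsNoetherian R N] [IsArtinian R N]
    (hN : Indec R N) (hNN' : IsCompl N N') {X Y : Submodule R M} (hXY : IsCompl X Y) :
    Disjoint N Y ∨ Disjoint N X :=
  (hN.injective_or_injective_of_add_eq_one
    (compression_projection_add_compression_projection hNN' hXY)).imp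
    (disjoint_of_injective_compression_projection hNN' hXY)
    (disjoint_of_injective_compression_projection hNN' hXY.symm)

end Indecomposable

theorem restriction_lemma_one_general
    (k : Type*) [Field k] (Λ : Type*) [Ring Λ] [Algebra k Λ] [FiniteDimensional k Λ]
    (M : Type*) [AddCommGroup M] [Module Λ M] [Module k M] [IsScalarTower k Λ M]
    (hfl : IsFiniteLength Λ M)
    (B : Subalgebra k Λ)
    (N N' : Submodule B M)
    (hcompl : IsCompl N N')
    (hindec : Indec B N)
    (hsoc : ((sSup {S : Submodule Λ M | IsAtom S} : Submodule Λ M) : Set M) =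
      ((sSup {S : Submodule B M | IsAtom S ∧ S ≤ N} : Submodule B M) : Set M)) :
    Indec Λ M := by
  obtain ⟨_, _⟩ := isFiniteLength_iff_isNoetherian_isArtinian.mp hfl
  have : Module.Finite k M := Module.Finite.trans Λ M
  have : IsNoetherian B M := isNoetherian_of_tower k inferInstance
  have : IsArtinian B M := isArtinian_of_tower k inferInstance
  have hatom_le (A : Submodule Λ M) (hA : IsAtom A) : A.restrictScalars B ≤ N := by
    have hA_soc : (A : Set M) ⊆ (sSup {S : Submodule Λ M | IsAtom S} : Submodule Λ M) :=
      le_sSup (α := Submodule Λ M) hA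
    rw [hsoc] at hA_soc
    exact hA_soc.trans (sSup_le fun _ hS => hS.2 : _ ≤ N)
  have heq_bot (Z : Submodule Λ M) (hZ : Disjoint N (Z.restrictScalars B)) : Z = ⊥ := by
    refine (eq_bot_or_exists_atom_le Z).resolve_right fun ⟨A, hA, hAZ⟩ => hA.1 ?_
    exact (restrictScalars_eq_bot_iff B Λ M).mp
      (le_bot_iff.mp (hZ (hatom_le A hA) (restrictScalars_mono B hAZ)))
  have : Nontrivial N := hindec.1
  refine ⟨N.injective_subtype.nontrivial, fun X Y hXY => ?_⟩
  exact ((hindec.disjoint_or_disjoint_of_isCompl hcompl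
    ((isCompl_restrictScalars_iff B).mpr hXY)).imp (heq_bot _) (heq_bot _)).symm

/-- Restriction Lemma 1.  Let `Λ` be a finite-dimensional algebra over a field `k`,
`B ⊆ Λ` a subalgebra and `M` a finite-length `Λ`-module.  Suppose that, as a
`B`-module, `M = N ⊕ N'` with `N` an indecomposable non-simple `B`-submodule and
`N'` a semisimple `B`-module, and that the socle of `M` as a `Λ`-module coincides,
as a subset of `M`, with the socle of `N` as a `B`-module.  Then `M` is an
indecomposable `Λ`-module. -/
theorem restriction_lemma_one
    (k : Type*) [Field k] (Λ : Type*) [Ring Λ] [Algebra k Λ] [FiniteDimensional k Λ]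
    (M : Type*) [AddCommGroup M] [Module Λ M] [Module k M] [IsScalarTower k Λ M]
    (hfl : IsFiniteLength Λ M)
    (B : Subalgebra k Λ)
    (N N' : Submodule B M)
    (hcompl : IsCompl N N')
    (hindec : Indec B N)
    (hnonsimple : ¬ IsSimpleModule B N)
    (hss : ∃ 𝒮 : Set (Submodule B M), (∀ S ∈ 𝒮, IsAtom S) ∧ N' = sSup 𝒮)
    (hsoc : ((sSup {S : Submodule Λ M | IsAtom S} : Submodule Λ M) : Set M) =
      ((sSup {S : Submodule B M | IsAtom S ∧ S ≤ N} : Submodule B M) : Set M)) :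
    Indec Λ M :=
  restriction_lemma_one_general k Λ M hfl B N N' hcompl hindec hsoc
end

section
/- Let Λ be a finite-dimensional algebra with radical J, and suppose there exist linearly independent elements φ, ψ ∈ Λ and primitive idempotents e, f with φ = eφf, ψ = eψf and Jφ = Jψ = φJ = ψJ = 0. Then the ideal lattice of Λ is not distributive: the ideals I₁ = ΛφΛ, I₂ = ΛψΛ, I₃ = Λ(φ+ψ)Λ are pairwise distinct with I₁ ∩ I₂ = I₂ ∩ I₃ = I₃ ∩ I₁ = 0 and I₁ + I₂ = I₂ + I₃ = I₃ + I₁. -/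
/-- An idempotent is primitive if it is nonzero and is not the sum of two nonzero
orthogonal idempotents. -/
def IsPrimitiveIdempotent {Λ : Type*} [Ring Λ] (e : Λ) : Prop :=
  IsIdempotentElem e ∧ e ≠ 0 ∧
    ¬ ∃ a b : Λ, IsIdempotentElem a ∧ IsIdempotentElem b ∧ a ≠ 0 ∧ b ≠ 0 ∧
      a * b = 0 ∧ b * a = 0 ∧ e = a + b

/-- `Λ` is basic: `Λ/rad Λ` is a product of copies of the base field `k`. -/
def IsBasicAlgebra (k : Type*) [Field k] (Λ : Type*) [Ring Λ] [Algebra k Λ] : Prop :=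
  ∃ (n : ℕ) (π : Λ →+* (Fin n → k)),
    Function.Surjective π ∧ RingHom.ker π = Ideal.jacobson (⊥ : Ideal Λ)

/-- The two-sided ideal `ΛφΛ` generated by an element `φ`. -/
def idealGen {Λ : Type*} [Ring Λ] (φ : Λ) : Ideal Λ :=
  Submodule.span Λ {x : Λ | ∃ a b : Λ, x = a * φ * b}

/-!
For a primitive idempotent `e` of a basic algebra, `eΛe = k e + eJe`, so modulo `J` every
`a ∈ Λ` acts on `e` (from either side) by a scalar. Since `J` kills `φ` and `ψ` from both
sides and `φ, ψ ∈ eΛf`, this gives `a χ b ∈ k χ` for `χ ∈ {φ, ψ, φ + ψ}`, i.e. `ΛχΛ = kχ`.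
Restricting scalars to `k` embeds the ideal lattice into the lattice of subspaces, where the
three lines spanned by `φ`, `ψ`, `φ + ψ` form a copy of the nondistributive lattice `M₃`.
-/

section Diamond

variable {α : Type*} [Lattice α] [OrderBot α]

/-- `a`, `b`, `c` are the atoms of a sublattice isomorphic to `M₃`. -/
structure IsDiamond (a b c : α) : Prop where
  distinct : a ≠ b ∧ b ≠ c ∧ c ≠ a
  inf_eq_bot : a ⊓ b = ⊥ ∧ b ⊓ c = ⊥ ∧ c ⊓ a = ⊥
  sup_eq : a ⊔ b = b ⊔ c ∧ b ⊔ c = c ⊔ a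

theorem IsDiamond.inf_sup_left_ne {a b c : α} (h : IsDiamond a b c) :
    a ⊓ (b ⊔ c) ≠ a ⊓ b ⊔ a ⊓ c := by
  intro hdistrib
  have ha : a = ⊥ := by
    rwa [← h.sup_eq.1, inf_sup_self, h.inf_eq_bot.1, inf_comm, h.inf_eq_bot.2.2, sup_bot_eq]
      at hdistrib
  apply h.distinct.2.1
  rw [← bot_sup_eq b, ← ha, h.sup_eq.1, h.sup_eq.2, ha, sup_bot_eq]

theorem IsDiamond.of_map {β F : Type*} [Lattice β] [OrderBot β] [FunLike F α β]
    [LatticeHomClass F α β] [BotHomClass F α β] {f : F} (hf : Function.Injective f)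
    {a b c : α} (h : IsDiamond (f a) (f b) (f c)) : IsDiamond a b c where
  distinct := ⟨fun hab => h.distinct.1 (congrArg f hab),
    fun hbc => h.distinct.2.1 (congrArg f hbc), fun hca => h.distinct.2.2 (congrArg f hca)⟩
  inf_eq_bot := by simpa only [← map_inf, ← map_bot f, hf.eq_iff] using h.inf_eq_bot
  sup_eq := by simpa only [← map_sup, hf.eq_iff] using h.sup_eq

end Diamond

section Lines

open Submodule

variable {K V : Type*} [Field K] [AddCommGroup V] [Module K V] {x y : V}

theorem LinearIndependent.span_singleton_inf_eq_bot (h : LinearIndependent K ![x, y]) :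
    K ∙ x ⊓ K ∙ y = ⊥ := by
  have hx : x ≠ 0 := by simpa using h.ne_zero 0
  have hy : y ≠ 0 := by simpa using h.ne_zero 1
  rw [← disjoint_iff, disjoint_span_singleton' hy, mem_span_singleton]
  rintro ⟨a, ha⟩
  exact (LinearIndependent.pair_iff' hx).mp h a ha

theorem LinearIndependent.span_singleton_ne (h : LinearIndependent K ![x, y]) :
    K ∙ x ≠ K ∙ y := by
  intro hxy
  have hy : y ≠ 0 := by simpa using h.ne_zero 1
  have hbot := h.span_singleton_inf_eq_bot
  rw [hxy, inf_idem, span_singleton_eq_bot] at hbot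
  exact hy hbot

theorem LinearIndependent.isDiamond_span_singleton (h : LinearIndependent K ![x, y]) :
    IsDiamond (K ∙ x) (K ∙ y) (K ∙ (x + y)) := by
  have h₂₃ : LinearIndependent K ![y, x + y] := by
    simpa using (LinearIndependent.pair_add_smul_add_smul_iff (0 : K) 1 1 1).mpr ⟨h, by simp⟩
  have h₃₁ : LinearIndependent K ![x + y, x] := by
    simpa using (LinearIndependent.pair_add_smul_add_smul_iff (1 : K) 1 1 0).mpr ⟨h, by simp⟩
  have hx : x ∈ K ∙ y ⊔ K ∙ (x + y) := by
    simpa using sub_mem (mem_sup_right (mem_span_singleton_self (x + y)) :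
      x + y ∈ K ∙ y ⊔ K ∙ (x + y)) (mem_sup_left (mem_span_singleton_self y))
  have hy : y ∈ K ∙ (x + y) ⊔ K ∙ x := by
    simpa using sub_mem (mem_sup_left (mem_span_singleton_self (x + y)) :
      x + y ∈ K ∙ (x + y) ⊔ K ∙ x) (mem_sup_right (mem_span_singleton_self x))
  have hxy : x + y ∈ K ∙ x ⊔ K ∙ y :=
    add_mem_sup (mem_span_singleton_self x) (mem_span_singleton_self y)
  refine ⟨⟨h.span_singleton_ne, h₂₃.span_singleton_ne, h₃₁.span_singleton_ne⟩,
    ⟨h.span_singleton_inf_eq_bot, h₂₃.span_singleton_inf_eq_bot, h₃₁.span_singleton_inf_eq_bot⟩,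
    ?_, ?_⟩
  all_goals rw [← span_singleton_le_iff_mem] at hx hy hxy
  · exact le_antisymm (sup_le hx le_sup_left) (sup_le le_sup_right hxy)
  · exact le_antisymm (sup_le hy le_sup_left) (sup_le le_sup_right hx)

end Lines

section PrimitiveIdempotent

variable {R : Type*} [Ring R] {g : R}

theorem IsPrimitiveIdempotent.eq_zero_or_eq (hg : IsPrimitiveIdempotent g) {a : R}
    (ha : IsIdempotentElem a) (hag : a * g = a) (hga : g * a = a) : a = 0 ∨ a = g := by
  by_contra! h
  refine hg.2.2 ⟨a, g - a, ha, ?_, h.1, sub_ne_zero.mpr h.2.symm, ?_, ?_,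
    (add_sub_cancel a g).symm⟩
  · rw [IsIdempotentElem, sub_mul, mul_sub, mul_sub, hg.1.eq, hga, hag, ha.eq, sub_self,
      sub_zero]
  · rw [mul_sub, hag, ha.eq, sub_self]
  · rw [sub_mul, hga, ha.eq, sub_self]

theorem isPrimitiveIdempotent_iff : IsPrimitiveIdempotent g ↔ IsIdempotentElem g ∧ g ≠ 0 ∧
    ∀ a : R, IsIdempotentElem a → a * g = a → g * a = a → a = 0 ∨ a = g := by
  refine ⟨fun hg => ⟨hg.1, hg.2.1, fun a => hg.eq_zero_or_eq⟩,
    fun ⟨hg, hg0, h⟩ => ⟨hg, hg0, ?_⟩⟩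
  rintro ⟨a, b, ha, hb, ha0, hb0, hab, hba, rfl⟩
  rcases h a ha (by rw [mul_add, ha.eq, hab, add_zero]) (by rw [add_mul, ha.eq, hba, add_zero])
    with h0 | h1
  · exact ha0 h0
  · exact hb0 (by simpa using h1)

theorem IsPrimitiveIdempotent.map_of_ker_isNilpotent {S : Type*} [Ring S] {π : R →+* S}
    (hπ : Function.Surjective π) (hnil : ∀ x ∈ RingHom.ker π, IsNilpotent x)
    (hg : IsPrimitiveIdempotent g) : IsPrimitiveIdempotent (π g) := by
  refine isPrimitiveIdempotent_iff.mpr ⟨hg.1.map π,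
    fun h0 => hg.2.1 (hg.1.eq_zero_of_isNilpotent (hnil g h0)), fun ε hε hεg hgε => ?_⟩
  obtain ⟨a, ha, rfl, hag, hga⟩ := exists_isIdempotentElem_mul_eq_zero_of_ker_isNilpotent π
    hnil ε (hπ ε) hε (1 - g) hg.1.one_sub
    (by rw [map_sub, map_one, mul_sub, mul_one, hεg, sub_self])
    (by rw [map_sub, map_one, sub_mul, one_mul, hgε, sub_self])
  rw [mul_sub, mul_one, sub_eq_zero, eq_comm] at hag
  rw [sub_mul, one_mul, sub_eq_zero, eq_comm] at hga
  rcases hg.eq_zero_or_eq ha hag hga with rfl | rfl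
  · exact Or.inl (map_zero π)
  · exact Or.inr rfl

theorem IsPrimitiveIdempotent.exists_eq_single {ι K : Type*} [DecidableEq ι] [Ring K]
    [IsDomain K] {g : ι → K} (hg : IsPrimitiveIdempotent g) : ∃ i, g = Pi.single i 1 := by
  obtain ⟨i, hi⟩ : ∃ i, g i ≠ 0 := by
    by_contra! h
    exact hg.2.1 (funext h)
  have hgi : g i = 1 :=
    (IsIdempotentElem.iff_eq_zero_or_one.mp (congrFun hg.1.eq i)).resolve_left hi
  have hsingle : IsIdempotentElem (Pi.single i 1 : ι → K) := by
    ext j; rcases eq_or_ne j i with rfl | hj <;> simp [*]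
  rcases hg.eq_zero_or_eq hsingle (by ext j; rcases eq_or_ne j i with rfl | hj <;> simp [*])
    (by ext j; rcases eq_or_ne j i with rfl | hj <;> simp [*]) with h0 | h1
  · exact absurd h0 (Pi.single_ne_zero_iff.mpr one_ne_zero)
  · exact ⟨i, h1.symm⟩

end PrimitiveIdempotent

/-- `τ` is only a ring homomorphism, so `τ ∘ algebraMap k Λ` may be a proper self-embedding
of `k`. -/
theorem RingHom.exists_map_algebraMap_eq {k Λ : Type*} [Field k] [IsAlgClosed k] [Ring Λ]
    [Algebra k Λ] [Algebra.IsIntegral k Λ] (τ : Λ →+* k) (a : Λ) :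
    ∃ μ : k, τ (algebraMap k Λ μ) = τ a := by
  obtain ⟨p, hp, hpa⟩ := Algebra.IsIntegral.isIntegral (R := k) a
  set σ := τ.comp (algebraMap k Λ)
  have hne : p.map σ ≠ 0 := (hp.map σ).ne_zero
  have hroot : τ a ∈ (p.map σ).roots := by
    rw [Polynomial.mem_roots hne, Polynomial.IsRoot, Polynomial.eval_map,
      ← Polynomial.hom_eval₂, hpa, map_zero]
  rw [(IsAlgClosed.splits p).roots_map_of_ne_zero hne] at hroot
  obtain ⟨μ, -, hμ⟩ := Multiset.mem_map.mp hroot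
  exact ⟨μ, hμ⟩

theorem IsArtinianRing.isNilpotent_of_mem_jacobson {R : Type*} [Ring R] [IsArtinianRing R]
    {x : R} (hx : x ∈ Ideal.jacobson (⊥ : Ideal R)) : IsNilpotent x := by
  obtain ⟨m, hm⟩ := IsArtinianRing.isNilpotent_jacobson_bot (R := R)
  exact ⟨m, by simpa [hm] using Ideal.pow_mem_pow hx m⟩

section BasicAlgebra

variable {k Λ : Type*} [Field k] [Ring Λ] [Algebra k Λ]

local notation "J" => Ideal.jacobson (⊥ : Ideal Λ)

theorem IsBasicAlgebra.exists_sub_smul_mem_jacobson [IsAlgClosed k] [FiniteDimensional k Λ]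
    (hΛ : IsBasicAlgebra k Λ) {e : Λ} (he : IsPrimitiveIdempotent e) (a : Λ) :
    ∃ μ : k, a * e - μ • e ∈ J ∧ e * a - μ • e ∈ J := by
  obtain ⟨n, π, hπ, hker⟩ := hΛ
  have : IsArtinianRing Λ := isArtinian_of_tower k inferInstance
  have hnil : ∀ x ∈ RingHom.ker π, IsNilpotent x := fun x hx =>
    IsArtinianRing.isNilpotent_of_mem_jacobson (hker ▸ hx)
  obtain ⟨i, hi⟩ := (he.map_of_ker_isNilpotent hπ hnil).exists_eq_single
  obtain ⟨μ, hμ⟩ := ((Pi.evalRingHom _ i).comp π).exists_map_algebraMap_eq a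
  simp only [RingHom.comp_apply, Pi.evalRingHom_apply] at hμ
  refine ⟨μ, ?_, ?_⟩ <;>
  · rw [← hker, RingHom.mem_ker, map_sub, map_mul, Algebra.smul_def, map_mul, hi]
    ext l
    rcases eq_or_ne l i with rfl | hl <;> simp [*]

theorem IsBasicAlgebra.exists_mul_mul_eq_smul [IsAlgClosed k] [FiniteDimensional k Λ]
    (hΛ : IsBasicAlgebra k Λ) {e f χ : Λ} (he : IsPrimitiveIdempotent e)
    (hf : IsPrimitiveIdempotent f) (hχ : χ = e * χ * f)
    (hJ : ∀ r ∈ J, r * χ = 0 ∧ χ * r = 0) (a b : Λ) : ∃ c : k, a * χ * b = c • χ := by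
  have heχ : e * χ = χ := by rw [hχ, ← mul_assoc, ← mul_assoc, he.1.eq]
  have hχf : χ * f = χ := by rw [hχ, mul_assoc, mul_assoc, hf.1.eq, ← mul_assoc]
  obtain ⟨μ, hμ, -⟩ := hΛ.exists_sub_smul_mem_jacobson he a
  obtain ⟨ν, -, hν⟩ := hΛ.exists_sub_smul_mem_jacobson hf b
  have hleft : a * χ = μ • χ := by
    have h := (hJ _ hμ).1
    rwa [sub_mul, smul_mul_assoc, mul_assoc, heχ, sub_eq_zero] at h
  have hright : χ * b = ν • χ := by
    have h := (hJ _ hν).2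
    rwa [mul_sub, mul_smul_comm, ← mul_assoc, hχf, sub_eq_zero] at h
  exact ⟨μ * ν, by rw [hleft, smul_mul_assoc, hright, smul_smul]⟩

end BasicAlgebra

theorem restrictScalars_idealGen_eq_span_singleton {k Λ : Type*} [Field k] [Ring Λ]
    [Algebra k Λ] {χ : Λ} (h : ∀ a b : Λ, ∃ c : k, a * χ * b = c • χ) :
    (idealGen χ).restrictScalars k = k ∙ χ := by
  refine le_antisymm (fun x hx => ?_) ?_
  · refine Submodule.span_induction ?_ (zero_mem _) (fun _ _ _ _ => add_mem) ?_ hx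
    · rintro _ ⟨a, b, rfl⟩
      obtain ⟨c, hc⟩ := h a b
      exact hc ▸ Submodule.smul_mem _ c (Submodule.mem_span_singleton_self χ)
    · rintro r y - hy
      obtain ⟨c, rfl⟩ := Submodule.mem_span_singleton.mp hy
      obtain ⟨d, hd⟩ := h r 1
      rw [smul_eq_mul, mul_smul_comm, ← mul_one (r * χ), hd, smul_smul]
      exact Submodule.smul_mem _ _ (Submodule.mem_span_singleton_self χ)
  · rw [Submodule.span_singleton_le_iff_mem, Submodule.restrictScalars_mem]
    exact Submodule.subset_span ⟨1, 1, by rw [one_mul, mul_one]⟩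

/-- Suppose `Λ` is a (basic) finite-dimensional algebra over an algebraically closed
field with radical `J`, and there are `k`-linearly independent elements `φ, ψ` and
primitive idempotents `e, f` with `φ = eφf`, `ψ = eψf`, `Jφ = Jψ = φJ = ψJ = 0`.
Then the ideal lattice of `Λ` is not distributive: the ideals `I₁ = ΛφΛ`,
`I₂ = ΛψΛ`, `I₃ = Λ(φ+ψ)Λ` are pairwise distinct with pairwise intersection `0`
and pairwise equal sums; in particular the distributive law fails for them. -/
theorem nondistributive_of_phi_psi
    (k : Type*) [Field k] [IsAlgClosed k]
    (Λ : Type*) [Ring Λ] [Algebra k Λ] [FiniteDimensional k Λ]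
    (hbasic : IsBasicAlgebra k Λ)
    (φ ψ : Λ) (hli : LinearIndependent k ![φ, ψ])
    (e f : Λ) (he : IsPrimitiveIdempotent e) (hf : IsPrimitiveIdempotent f)
    (hφ : φ = e * φ * f) (hψ : ψ = e * ψ * f)
    (hJ : ∀ a ∈ Ideal.jacobson (⊥ : Ideal Λ),
      a * φ = 0 ∧ a * ψ = 0 ∧ φ * a = 0 ∧ ψ * a = 0) :
    (idealGen φ ≠ idealGen ψ ∧ idealGen ψ ≠ idealGen (φ + ψ) ∧
        idealGen (φ + ψ) ≠ idealGen φ) ∧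
    (idealGen φ ⊓ idealGen ψ = ⊥ ∧ idealGen ψ ⊓ idealGen (φ + ψ) = ⊥ ∧
        idealGen (φ + ψ) ⊓ idealGen φ = ⊥) ∧
    (idealGen φ ⊔ idealGen ψ = idealGen ψ ⊔ idealGen (φ + ψ) ∧
        idealGen ψ ⊔ idealGen (φ + ψ) = idealGen (φ + ψ) ⊔ idealGen φ) ∧
    ¬ (idealGen φ ⊓ (idealGen ψ ⊔ idealGen (φ + ψ)) =
        (idealGen φ ⊓ idealGen ψ) ⊔ (idealGen φ ⊓ idealGen (φ + ψ))) := by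
  have hline : ∀ χ : Λ, χ = e * χ * f → (∀ r ∈ Ideal.jacobson (⊥ : Ideal Λ),
      r * χ = 0 ∧ χ * r = 0) → (idealGen χ).restrictScalars k = k ∙ χ :=
    fun χ hχ hJχ => restrictScalars_idealGen_eq_span_singleton
      (hbasic.exists_mul_mul_eq_smul he hf hχ hJχ)
  have hφk := hline φ hφ fun r hr => ⟨(hJ r hr).1, (hJ r hr).2.2.1⟩
  have hψk := hline ψ hψ fun r hr => ⟨(hJ r hr).2.1, (hJ r hr).2.2.2⟩
  have hsumk := hline (φ + ψ) (by rw [mul_add, add_mul, ← hφ, ← hψ]) fun r hr => by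
    obtain ⟨h₁, h₂, h₃, h₄⟩ := hJ r hr
    rw [mul_add, add_mul, h₁, h₂, h₃, h₄, add_zero]
    exact ⟨rfl, rfl⟩
  have hlines := hli.isDiamond_span_singleton
  rw [← hφk, ← hψk, ← hsumk] at hlines
  have hdiamond : IsDiamond (idealGen φ) (idealGen ψ) (idealGen (φ + ψ)) :=
    IsDiamond.of_map (f := Submodule.restrictScalarsLatticeHom k Λ Λ)
      (Submodule.restrictScalars_injective k Λ Λ) hlines
  exact ⟨hdiamond.distinct, hdiamond.inf_eq_bot, hdiamond.sup_eq, hdiamond.inf_sup_left_ne⟩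
end

section
/- If M' ⊆ M is a uniform inclusion of finite-length Λ-modules and M' is accessible, then M is accessible. -/
universe u v

/-- Accessible modules, defined inductively: simple modules are accessible, and an
indecomposable module is accessible provided it has a maximal submodule (i.e. a
submodule of length one less) which is accessible, or a simple submodule whose
quotient (a factor module of length one less) is accessible. -/
inductive Accessible (Λ : Type u) [Ring Λ] : (M : Type v) → [AddCommGroup M] → [Module Λ M] → Prop where
  | of_simple {M : Type v} [AddCommGroup M] [Module Λ M] :
      IsSimpleModule Λ M → Accessible Λ M
  | of_submodule {M : Type v} [AddCommGroup M] [Module Λ M] (N : Submodule Λ M) :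
      Indec Λ M → IsCoatom N → Accessible Λ N → Accessible Λ M
  | of_quotient {M : Type v} [AddCommGroup M] [Module Λ M] (N : Submodule Λ M) :
      Indec Λ M → IsAtom N → Accessible Λ (M ⧸ N) → Accessible Λ M

section

variable {Λ : Type*} [Ring Λ] {M N : Type*} [AddCommGroup M] [Module Λ M]
  [AddCommGroup N] [Module Λ N]

theorem Indec.congr (h : Indec Λ M) (e : M ≃ₗ[Λ] N) : Indec Λ N := by
  obtain ⟨_, hdecomp⟩ := h
  refine ⟨e.symm.toEquiv.nontrivial, fun A B hAB => ?_⟩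
  let f : Submodule Λ N ≃o Submodule Λ M := Submodule.orderIsoMapComap e.symm
  simpa only [← f.map_bot, f.injective.eq_iff] using hdecomp (f A) (f B) (f.isCompl hAB)

theorem Submodule.isCoatom_comap_subtype_of_covBy {W U : Submodule Λ M} (h : W ⋖ U) :
    IsCoatom (W.comap U.subtype) :=
  isSimpleModule_iff_isCoatom.mp ((covBy_iff_quot_is_simple h.le).mp h)

end

section

variable {Λ : Type u} [Ring Λ]

theorem Accessible.congr {M : Type v} [AddCommGroup M] [Module Λ M] (h : Accessible Λ M) :
    ∀ {N : Type v} [AddCommGroup N] [Module Λ N], (M ≃ₗ[Λ] N) → Accessible Λ N := by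
  induction h with
  | of_simple hs =>
    exact fun e => .of_simple (IsSimpleModule.congr e.symm)
  | of_submodule K hM hK _ ih =>
    intro N _ _ e
    refine .of_submodule (K.map (e : _ →ₗ[Λ] N)) (hM.congr e) ?_ (ih (e.submoduleMap K))
    exact (Submodule.orderIsoMapComap e).isCoatom_iff K |>.mpr hK
  | of_quotient K hM hK _ ih =>
    intro N _ _ e
    refine .of_quotient (K.map (e : _ →ₗ[Λ] N)) (hM.congr e) ?_
      (ih (Submodule.Quotient.equiv K _ e rfl))
    exact (Submodule.orderIsoMapComap e).isAtom_iff K |>.mpr hK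

theorem Accessible.of_covBy {M : Type v} [AddCommGroup M] [Module Λ M] {W U : Submodule Λ M}
    (hWU : W ⋖ U) (hU : Indec Λ U) (hW : Accessible Λ W) : Accessible Λ U :=
  .of_submodule _ hU (Submodule.isCoatom_comap_subtype_of_covBy hWU)
    (hW.congr (Submodule.comapSubtypeEquivOfLe hWU.le).symm)

end

/-- If `M' ⊆ M` is a uniform inclusion (every submodule `U` with `M' ⊆ U ⊆ M` is
indecomposable) of finite-length modules and `M'` is accessible, then `M` is
accessible. -/
theorem accessible_of_uniform_inclusion
    (Λ : Type u) [Ring Λ] (M : Type v) [AddCommGroup M] [Module Λ M]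
    (hfl : IsFiniteLength Λ M)
    (M' : Submodule Λ M)
    (huniform : ∀ U : Submodule Λ M, M' ≤ U → Indec Λ U)
    (hacc : Accessible Λ M') :
    Accessible Λ M := by
  -- Artinian: induction on `U`; Noetherian: every `M' < U` is refined to `M' ≤ W ⋖ U`.
  obtain ⟨_, _⟩ := isFiniteLength_iff_isNoetherian_isArtinian.mp hfl
  suffices H : ∀ U : Submodule Λ M, M' ≤ U → Accessible Λ U from
    (H ⊤ le_top).congr Submodule.topEquiv
  intro U
  induction U using WellFoundedLT.induction with
  | ind U ih =>
    intro hM'U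
    obtain rfl | hlt := eq_or_lt_of_le hM'U
    · exact hacc
    · obtain ⟨W, hM'W, hWU⟩ := exists_le_covBy_of_lt hlt
      exact (ih W hWU.lt hM'W).of_covBy hWU (huniform U hM'U)
end

section
/- If π : M → M'' is a couniform projection of finite-length Λ-modules (i.e. M'' = M/X and M/X' is indecomposable for every submodule X' ⊆ X) and M'' is accessible, then M is accessible. -/
universe u v

/-! If `Y ⋖ X`, then `X/Y` is a simple submodule of the indecomposable module `M/Y` with
factor module `M/X`, so accessibility passes from `M/X` to `M/Y`. Removing one composition
factor of `X` at a time, well-founded induction on `X` (the submodule lattice is Artinian)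
reaches `X = 0`. -/

theorem Indec.of_linearEquiv {Λ : Type*} [Ring Λ] {M N : Type*} [AddCommGroup M] [Module Λ M]
    [AddCommGroup N] [Module Λ N] (h : Indec Λ M) (e : M ≃ₗ[Λ] N) : Indec Λ N := by
  obtain ⟨hnontrivial, hindec⟩ := h
  refine ⟨e.symm.toEquiv.nontrivial, fun A B hAB => ?_⟩
  let f := Submodule.orderIsoMapComap e.symm
  have := hindec (f A) (f B) (f.isCompl hAB)
  rwa [← f.map_bot, f.injective.eq_iff, f.injective.eq_iff] at this

theorem Accessible.of_linearEquiv {Λ : Type u} [Ring Λ] {M N : Type v} [AddCommGroup M]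
    [Module Λ M] [AddCommGroup N] [Module Λ N] (h : Accessible Λ M) (e : M ≃ₗ[Λ] N) :
    Accessible Λ N := by
  induction h generalizing N with
  | of_simple hsimple => exact .of_simple (IsSimpleModule.congr e.symm)
  | of_submodule P hindec hcoatom _ ih =>
      let f := Submodule.orderIsoMapComap e
      exact .of_submodule (f P) (hindec.of_linearEquiv e) (f.isCoatom_iff P |>.mpr hcoatom)
        (ih (e.submoduleMap P))
  | of_quotient P hindec hatom _ ih =>
      let f := Submodule.orderIsoMapComap e
      exact .of_quotient (f P) (hindec.of_linearEquiv e) (f.isAtom_iff P |>.mpr hatom)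
        (ih (Submodule.Quotient.equiv P _ e rfl))

theorem Submodule.isAtom_map_mkQ_iff {R M : Type*} [Ring R] [AddCommGroup M] [Module R M]
    {Y X : Submodule R M} (h : Y ≤ X) : IsAtom (X.map Y.mkQ) ↔ Y ⋖ X :=
  ((Submodule.comapMkQRelIso Y).symm.isAtom_iff ⟨X, h⟩).trans Set.Ici.isAtom_iff

theorem Accessible.quotient_of_covBy {Λ : Type u} [Ring Λ] {M : Type v} [AddCommGroup M]
    [Module Λ M] {Y X : Submodule Λ M} (hYX : Y ⋖ X) (hindec : Indec Λ (M ⧸ Y))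
    (hacc : Accessible Λ (M ⧸ X)) : Accessible Λ (M ⧸ Y) :=
  .of_quotient (X.map Y.mkQ) hindec ((Submodule.isAtom_map_mkQ_iff hYX.le).mpr hYX)
    (hacc.of_linearEquiv (Submodule.quotientQuotientEquivQuotient Y X hYX.le).symm)

/-- If `π : M → M/X` is a couniform projection (that is, `M/X'` is indecomposable
for every submodule `X' ⊆ X`) of finite-length modules and `M/X` is accessible,
then `M` is accessible. -/
theorem accessible_of_couniform_projection
    (Λ : Type u) [Ring Λ] (M : Type v) [AddCommGroup M] [Module Λ M]
    (hfl : IsFiniteLength Λ M)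
    (X : Submodule Λ M)
    (hcouniform : ∀ X' : Submodule Λ M, X' ≤ X → Indec Λ (M ⧸ X'))
    (hacc : Accessible Λ (M ⧸ X)) :
    Accessible Λ M := by
  obtain ⟨_, _⟩ := isFiniteLength_iff_isNoetherian_isArtinian.mp hfl
  induction X using WellFoundedLT.induction with
  | _ X ih =>
    rcases eq_bot_or_bot_lt X with rfl | hX
    · exact hacc.of_linearEquiv (Submodule.quotEquivOfEqBot ⊥ rfl)
    obtain ⟨Y, -, hYX⟩ := hX.exists_le_covby
    exact ih Y hYX.lt (fun X' hX' => hcouniform X' (hX'.trans hYX.le))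
      (hacc.quotient_of_covBy hYX (hcouniform Y hYX.le))
end

section
/- Let B = k⟨φ, ψ⟩/(φ², ψ², φψ, ψφ) be the 3-dimensional local algebra with basis 1, φ, ψ and square-zero radical, and let V be a B-module with elements x, y and u such that φx = 0, ψx = φy = u ≠ 0, ψy = 0. In V^n (with copies indexed 1..n), set z_i = y_(i) + x_(i+1) for 1 ≤ i ≤ n−1. Then the B-submodule N = Σ_{i=1}^{n−1} B z_i of V^n has k-basis {z₁,…,z_{n−1}, u_(1),…,u_(n)}, its socle equals Σ_{i=1}^n k u_(i), and N is an indecomposable B-module of length 2n−1. -/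
/-- The length of a module, as the Krull dimension of its submodule lattice. -/
noncomputable def moduleLength (Λ : Type*) [Ring Λ] (M : Type*) [AddCommGroup M]
    [Module Λ M] : WithBot ℕ∞ :=
  Order.krullDim (Submodule Λ M)

/-!
Everything follows from the relations `φ z_i = u_(i)`, `ψ z_i = u_(i+1)`, `φ u_(j) = ψ u_(j) = 0`
and the linear independence of the `u_(j)` (`IsPreprojectiveFamily`).
Since `B` is spanned by `1, φ, ψ`, the `B`-span of a set that `φ` and `ψ` map into its `k`-span is
that `k`-span, which gives the basis. As `φ` maps the `z_i` to independent vectors and kills the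
`u_(j)`, the kernel of `φ` on `N` is the span of the `u_(j)`, and it contains every simple submodule
because `φ² = 0` on `N`. An endomorphism `f` of `N` acts on the `u_(j)` by a matrix intertwining the
two embeddings `k^(n-1) → k^n` induced by `φ` and `ψ`; such a matrix is a scalar `c`, and then
`(f - c)² = 0`, so the only idempotents are `0` and `1`. Finally `B` acts through scalars both on
the socle and on `N` modulo the socle, so the `B`-length of `N` equals its `k`-dimension `2n - 1`.
-/

open Submodule Set

section ScalarAction

variable {k B P : Type*} [Field k] [CommRing B] [Algebra k B] [AddCommGroup P] [Module B P]
  [Module k P] [IsScalarTower k B P]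

theorem Submodule.restrictScalars_span_of_smul_mem {G : Set B} (hG : span k G = ⊤) {X : Set P}
    (hX : ∀ b ∈ G, ∀ x ∈ X, b • x ∈ span k X) : (span B X).restrictScalars k = span k X := by
  refine le_antisymm ?_ (span_le_restrictScalars k B X)
  have hgen : ∀ b ∈ G, ∀ v ∈ span k X, b • v ∈ span k X := fun b hb v hv => by
    induction hv using span_induction with
    | mem x hx => exact hX b hb x hx
    | zero => simp
    | add v w _ _ hv hw => rw [smul_add]; exact add_mem hv hw
    | smul a v _ hv => rw [smul_comm]; exact smul_mem _ a hv
  let Q : Submodule B P :=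
    { toAddSubmonoid := (span k X).toAddSubmonoid
      smul_mem' := fun b v hv => by
        change b • v ∈ span k X
        have hb : b ∈ span k G := hG ▸ mem_top
        induction hb using span_induction with
        | mem b hb => exact hgen b hb v hv
        | zero => simp
        | add b c _ _ hb hc => rw [add_smul]; exact add_mem hb hc
        | smul a b _ hb => rw [smul_assoc]; exact smul_mem _ a hb }
  have hQ : span B X ≤ Q := span_le.2 (subset_span (R := k))
  exact fun v hv => hQ hv

theorem exists_eq_algebraMap_add_smul_add_smul {φ ψ : B}
    (hB : span k ({1, φ, ψ} : Set B) = ⊤) (b : B) :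
    ∃ a c d : k, b = algebraMap k B a + c • φ + d • ψ := by
  have hb : b ∈ span k ({1, φ, ψ} : Set B) := hB ▸ mem_top
  obtain ⟨a, w, hw, rfl⟩ := mem_span_insert.1 hb
  obtain ⟨c, w', hw', rfl⟩ := mem_span_insert.1 hw
  obtain ⟨d, rfl⟩ := mem_span_singleton.1 hw'
  exact ⟨a, c, d, by rw [Algebra.algebraMap_eq_smul_one, add_assoc]⟩

def Submodule.orderIsoRestrictScalars (h : ∀ b : B, ∃ a : k, ∀ v : P, b • v = a • v) :
    Submodule B P ≃o Submodule k P where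
  toFun := restrictScalars k
  invFun p :=
    { toAddSubmonoid := p.toAddSubmonoid
      smul_mem' := fun b v hv => by
        obtain ⟨a, ha⟩ := h b
        rw [ha]
        exact p.smul_mem a hv }
  left_inv _ := rfl
  right_inv _ := rfl
  map_rel_iff' := Iff.rfl

theorem Module.length_eq_of_forall_smul_eq (h : ∀ b : B, ∃ a : k, ∀ v : P, b • v = a • v) :
    Module.length B P = Module.length k P := by
  apply WithBot.coe_injective
  rw [Module.coe_length, Module.coe_length,
    Order.krullDim_eq_of_orderIso (Submodule.orderIsoRestrictScalars h)]

theorem Module.length_eq_of_forall_smul_sub_mem (S : Submodule B P)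
    (hP : ∀ b : B, ∃ a : k, ∀ v : P, b • v - a • v ∈ S)
    (hS : ∀ b : B, ∃ a : k, ∀ v ∈ S, b • v = a • v) :
    Module.length B P = Module.length k P := by
  have hSk : ∀ b : B, ∃ a : k, ∀ v : S, b • v = a • v := fun b => by
    obtain ⟨a, ha⟩ := hS b
    exact ⟨a, fun v => Subtype.ext (ha v v.2)⟩
  have hQk : ∀ b : B, ∃ a : k, ∀ v : P ⧸ S, b • v = a • v := fun b => by
    obtain ⟨a, ha⟩ := hP b
    refine ⟨a, fun v => ?_⟩
    induction v using Submodule.Quotient.induction_on with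
    | H v => exact (Submodule.Quotient.eq S).2 (ha v)
  rw [Module.length_eq_add_of_exact S.subtype S.mkQ S.injective_subtype S.mkQ_surjective
      (LinearMap.exact_subtype_mkQ S),
    Module.length_eq_add_of_exact (S.subtype.restrictScalars k) (S.mkQ.restrictScalars k)
      S.injective_subtype S.mkQ_surjective (LinearMap.exact_subtype_mkQ S),
    Module.length_eq_of_forall_smul_eq hSk, Module.length_eq_of_forall_smul_eq hQk]

theorem Submodule.isAtom_span_singleton_of_forall_smul_eq {v : P} (hv : v ≠ 0)
    (h : ∀ b : B, ∃ a : k, b • v = a • v) : IsAtom (span B {v}) := by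
  refine ⟨by simpa using hv, fun S hS => ?_⟩
  by_contra hSne
  obtain ⟨w, hwS, hw⟩ := (Submodule.ne_bot_iff S).1 hSne
  obtain ⟨b, rfl⟩ := mem_span_singleton.1 (hS.le hwS)
  obtain ⟨a, ha⟩ := h b
  have ha0 : a ≠ 0 := by rintro rfl; simp [ha] at hw
  have hvS : v ∈ S := by
    simpa [ha, smul_smul, inv_mul_cancel₀ ha0] using S.smul_of_tower_mem a⁻¹ hwS
  exact hS.not_ge ((span_singleton_le_iff_mem v S).2 hvS)

theorem IsAtom.smul_eq_zero_of_smul_smul_eq_zero {S : Submodule B P} (hS : IsAtom S) {ρ : B}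
    (hρ : ∀ v ∈ S, ρ • ρ • v = 0) {v : P} (hv : v ∈ S) : ρ • v = 0 := by
  rcases hS.le_iff.1 (show S.map (LinearMap.lsmul B P ρ) ≤ S from
      map_le_iff_le_comap.2 fun w hw => S.smul_mem ρ hw) with h | h
  · simpa using h.le (mem_map_of_mem (f := LinearMap.lsmul B P ρ) hv)
  · obtain ⟨w, hw, rfl⟩ := mem_map.1 (h.ge hv)
    exact hρ w hw

end ScalarAction

theorem Fin.eq_ite_of_shift_invariant {k : Type*} [Zero k] {m : ℕ}
    (S : Fin (m + 1) → Fin (m + 1) → k)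
    (hshift : ∀ i i' : Fin m, S i.succ i'.succ = S i.castSucc i'.castSucc)
    (hlast : ∀ i : Fin m, S i.castSucc (Fin.last m) = 0)
    (hzero : ∀ i : Fin m, S i.succ 0 = 0) (j p : Fin (m + 1)) :
    S j p = if j = p then S 0 0 else 0 := by
  have diag : ∀ t a b (ha : a + t < m + 1) (hb : b + t < m + 1),
      S ⟨a + t, ha⟩ ⟨b + t, hb⟩ = S ⟨a, by omega⟩ ⟨b, by omega⟩ := by
    intro t
    induction t with
    | zero => intros; rfl
    | succ t ih =>
      intro a b ha hb
      exact (hshift ⟨a + t, by omega⟩ ⟨b + t, by omega⟩).trans (ih a b _ _)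
  obtain ⟨j, hj⟩ := j
  obtain ⟨p, hp⟩ := p
  rcases lt_trichotomy j p with hjp | rfl | hjp
  · obtain ⟨d, rfl⟩ : ∃ d, m = p + d := ⟨m - p, by omega⟩
    rw [if_neg (by simp [hjp.ne]), ← diag d j p (by omega) (by omega)]
    exact hlast ⟨j + d, by omega⟩
  · rw [if_pos rfl, show (⟨j, hj⟩ : Fin (m + 1)) = ⟨0 + j, by omega⟩ from
      Fin.ext (zero_add j).symm, diag]
    rfl
  · obtain ⟨d, rfl⟩ : ∃ d, j = d + 1 + p := ⟨j - p - 1, by omega⟩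
    rw [if_neg (by simp),
      show (⟨p, hp⟩ : Fin (m + 1)) = ⟨0 + p, by omega⟩ from Fin.ext (zero_add p).symm, diag]
    exact hzero ⟨d, by omega⟩

theorem indec_of_forall_isIdempotentElem {R P : Type*} [Ring R] [AddCommGroup P] [Module R P]
    [Nontrivial P] (h : ∀ f : Module.End R P, IsIdempotentElem f → f = 0 ∨ f = 1) :
    Indec R P := by
  refine ⟨inferInstance, fun A C hAC => ?_⟩
  rcases h _ (Submodule.isIdempotentElem_projection hAC) with hf | hf
  · left; rw [← Submodule.range_projection hAC, hf, LinearMap.range_zero]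
  · right; rw [← Submodule.ker_projection hAC, hf, Module.End.one_eq_id, LinearMap.ker_id]

theorem LinearIndependent.exists_dual {k M ι : Type*} [Field k] [AddCommGroup M] [Module k M]
    [DecidableEq ι] {v : ι → M} (hv : LinearIndependent k v) :
    ∃ ε : ι → Module.Dual k M, ∀ i j, ε i (v j) = if j = i then 1 else 0 := by
  choose ε hε using fun i => LinearMap.exists_extend ((Module.Basis.span hv).coord i)
  refine ⟨ε, fun i j => ?_⟩
  have := congr($(hε i) ⟨v j, subset_span (mem_range_self j)⟩)
  simp only [LinearMap.comp_apply, Submodule.subtype_apply] at this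
  rw [this, ← Module.Basis.span_apply hv j, Module.Basis.coord_apply, Module.Basis.repr_self,
    Finsupp.single_apply]

theorem Submodule.eq_sum_dual_smul_of_mem_span {k M ι : Type*} [Field k] [AddCommGroup M]
    [Module k M] [Fintype ι] [DecidableEq ι] {v : ι → M} {ε : ι → Module.Dual k M}
    (hε : ∀ i j, ε i (v j) = if j = i then 1 else 0) {w : M} (hw : w ∈ span k (range v)) :
    w = ∑ i, ε i w • v i := by
  obtain ⟨c, rfl⟩ := (mem_span_range_iff_exists_fun k).1 hw
  simp [hε, Finset.sum_ite_eq']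

theorem IsIdempotentElem.eq_zero_or_one_of_algebraMap_add {k R : Type*} [Field k] [Ring R]
    [Nontrivial R] [Algebra k R] {c : k} {g : R} (hg : g * g = 0)
    (he : IsIdempotentElem (algebraMap k R c + g)) :
    algebraMap k R c + g = 0 ∨ algebraMap k R c + g = 1 := by
  have hsq : (algebraMap k R c + g) * (algebraMap k R c + g)
      = algebraMap k R (c * c) + algebraMap k R (2 * c) * g := by
    rw [add_mul, mul_add, mul_add, hg, ← Algebra.commutes c g, map_mul, map_mul, map_ofNat]
    noncomm_ring
  have hq : algebraMap k R (c * c - c) = algebraMap k R (1 - 2 * c) * g := by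
    rw [map_sub, map_sub, map_one, sub_mul, one_mul, sub_eq_sub_iff_add_eq_add, ← hsq, he.eq,
      add_comm]
  -- `c² - c` is a multiple of `g` that annihilates `g`, so its square vanishes
  have hqg : algebraMap k R (c * c - c) * g = 0 := by rw [hq, mul_assoc, hg, mul_zero]
  have hc : IsIdempotentElem c := by
    have : algebraMap k R ((c * c - c) * (c * c - c)) = 0 := by
      rw [map_mul, hq, ← mul_assoc, ← Algebra.commutes, mul_assoc, ← hq, hqg, mul_zero]
    rw [map_eq_zero_iff _ (algebraMap k R).injective, mul_self_eq_zero, sub_eq_zero] at this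
    exact this
  rcases IsIdempotentElem.iff_eq_zero_or_one.1 hc with rfl | rfl
  · left
    simp only [map_zero, zero_add] at he ⊢
    rw [← he.eq, hg]
  · right
    norm_num at hq
    simp [← hq]

-- Indices start at `0`: `z i` and `u j` are `z_(i+1)` and `u_(j+1)` of the statement.
structure IsPreprojectiveFamily (k : Type*) {B M : Type*} [Field k] [CommRing B] [Algebra k B]
    [AddCommGroup M] [Module B M] [Module k M] (φ ψ : B) {m : ℕ} (z : Fin m → M)
    (u : Fin (m + 1) → M) : Prop where
  φ_smul_z : ∀ i, φ • z i = u i.castSucc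
  ψ_smul_z : ∀ i, ψ • z i = u i.succ
  φ_smul_u : ∀ j, φ • u j = 0
  ψ_smul_u : ∀ j, ψ • u j = 0
  linearIndependent_u : LinearIndependent k u

namespace IsPreprojectiveFamily

variable {k B M : Type*} [Field k] [CommRing B] [Algebra k B] [AddCommGroup M] [Module B M]
  [Module k M] {φ ψ : B} {m : ℕ} {z : Fin m → M} {u : Fin (m + 1) → M}

theorem span_u_le_ker_φ (h : IsPreprojectiveFamily k φ ψ z u) :
    span B (range u) ≤ LinearMap.ker (LinearMap.lsmul B M φ) :=
  span_le.2 <| range_subset_iff.2 h.φ_smul_u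

theorem span_u_le_ker_ψ (h : IsPreprojectiveFamily k φ ψ z u) :
    span B (range u) ≤ LinearMap.ker (LinearMap.lsmul B M ψ) :=
  span_le.2 <| range_subset_iff.2 h.ψ_smul_u

theorem φ_smul_mem_span_u (h : IsPreprojectiveFamily k φ ψ z u) {v : M}
    (hv : v ∈ span B (range z)) : φ • v ∈ span B (range u) := by
  refine (span_le (p := (span B (range u)).comap (LinearMap.lsmul B M φ))).2 ?_ hv
  rintro _ ⟨i, rfl⟩
  simpa [h.φ_smul_z] using subset_span (mem_range_self _)

theorem ψ_smul_mem_span_u (h : IsPreprojectiveFamily k φ ψ z u) {v : M}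
    (hv : v ∈ span B (range z)) : ψ • v ∈ span B (range u) := by
  refine (span_le (p := (span B (range u)).comap (LinearMap.lsmul B M ψ))).2 ?_ hv
  rintro _ ⟨i, rfl⟩
  simpa [h.ψ_smul_z] using subset_span (mem_range_self _)

theorem u_mem_span_z (h : IsPreprojectiveFamily k φ ψ z u) (hm : m ≠ 0) (j : Fin (m + 1)) :
    u j ∈ span B (range z) := by
  induction j using Fin.lastCases with
  | last =>
    obtain ⟨m, rfl⟩ := Nat.exists_eq_succ_of_ne_zero hm
    rw [← Fin.succ_last, ← h.ψ_smul_z]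
    exact smul_mem _ _ (subset_span (mem_range_self _))
  | cast i =>
    rw [← h.φ_smul_z]
    exact smul_mem _ _ (subset_span (mem_range_self _))

variable [IsScalarTower k B M]

theorem linearIndependent_φ_smul_z (h : IsPreprojectiveFamily k φ ψ z u) :
    LinearIndependent k ((LinearMap.lsmul B M φ).restrictScalars k ∘ z) := by
  simpa [Function.comp_def, h.φ_smul_z] using
    h.linearIndependent_u.comp _ (Fin.castSucc_injective m)

theorem linearIndependent (h : IsPreprojectiveFamily k φ ψ z u) :
    LinearIndependent k (Sum.elim z u) :=
  h.linearIndependent_φ_smul_z.of_comp.sum_type h.linearIndependent_u <|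
    (range_ker_disjoint h.linearIndependent_φ_smul_z).mono_right
      fun _ hv => h.span_u_le_ker_φ (span_le_restrictScalars k B _ hv)

theorem mem_span_u_of_φ_smul_eq_zero (h : IsPreprojectiveFamily k φ ψ z u) {v : M}
    (hv : v ∈ span k (range (Sum.elim z u))) (hφv : φ • v = 0) : v ∈ span k (range u) := by
  rw [Set.Sum.elim_range, span_union, mem_sup] at hv
  obtain ⟨a, ha, b, hb, rfl⟩ := hv
  have hφb : φ • b = 0 := h.span_u_le_ker_φ (span_le_restrictScalars k B _ hb)
  have hφa : φ • a = 0 := by rwa [smul_add, hφb, add_zero] at hφv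
  obtain rfl : a = 0 := disjoint_def.1 (range_ker_disjoint h.linearIndependent_φ_smul_z) a ha hφa
  simpa using hb

theorem restrictScalars_span_z (h : IsPreprojectiveFamily k φ ψ z u)
    (hB : span k ({1, φ, ψ} : Set B) = ⊤) (hm : m ≠ 0) :
    (span B (range z)).restrictScalars k = span k (range (Sum.elim z u)) := by
  have hN : span B (range z) = span B (range (Sum.elim z u)) := by
    refine le_antisymm (span_mono ?_) (span_le.2 ?_) <;> rw [Set.Sum.elim_range]
    · exact subset_union_left
    · exact union_subset subset_span (range_subset_iff.2 (h.u_mem_span_z hm))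
  rw [hN]
  refine restrictScalars_span_of_smul_mem hB ?_
  rintro b hb _ ⟨s, rfl⟩
  rcases hb with rfl | rfl | rfl
  · rw [one_smul]
    exact subset_span (mem_range_self s)
  · cases s with
    | inl i => exact subset_span ⟨Sum.inr i.castSucc, (h.φ_smul_z i).symm⟩
    | inr j => simp [h.φ_smul_u]
  · cases s with
    | inl i => exact subset_span ⟨Sum.inr i.succ, (h.ψ_smul_z i).symm⟩
    | inr j => simp [h.ψ_smul_u]

theorem sSup_isAtom_le_span_z (h : IsPreprojectiveFamily k φ ψ z u)
    (hB : span k ({1, φ, ψ} : Set B) = ⊤) (hm : m ≠ 0) :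
    sSup {S : Submodule B M | IsAtom S ∧ S ≤ span B (range z)} = span B (range u) := by
  apply le_antisymm
  · refine sSup_le fun S ⟨hS, hSN⟩ v hv => span_le_restrictScalars k B _ ?_
    have hφv : φ • v = 0 := hS.smul_eq_zero_of_smul_smul_eq_zero
      (fun w hw => h.span_u_le_ker_φ (h.φ_smul_mem_span_u (hSN hw))) hv
    exact h.mem_span_u_of_φ_smul_eq_zero (h.restrictScalars_span_z hB hm ▸ hSN hv) hφv
  · rw [span_range_eq_iSup]
    refine iSup_le fun j => le_sSup ⟨isAtom_span_singleton_of_forall_smul_eq (k := k)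
      (h.linearIndependent_u.ne_zero j) fun b => ?_,
      (span_singleton_le_iff_mem _ _).2 (h.u_mem_span_z hm j)⟩
    obtain ⟨a, c, d, rfl⟩ := exists_eq_algebraMap_add_smul_add_smul hB b
    exact ⟨a, by simp [add_smul, smul_assoc, h.φ_smul_u, h.ψ_smul_u, algebraMap_smul]⟩

theorem length_span_z (h : IsPreprojectiveFamily k φ ψ z u)
    (hB : span k ({1, φ, ψ} : Set B) = ⊤) (hm : m ≠ 0) :
    Module.length B (span B (range z)) = 2 * m + 1 := by
  set N := span B (range z)
  have hlen : Module.length B N = Module.length k N := by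
    refine Module.length_eq_of_forall_smul_sub_mem ((span B (range u)).comap N.subtype)
      (fun b => ?_) (fun b => ?_) <;>
    obtain ⟨a, c, d, rfl⟩ := exists_eq_algebraMap_add_smul_add_smul hB b <;>
    refine ⟨a, fun v => ?_⟩
    · have hφ := smul_of_tower_mem _ c (h.φ_smul_mem_span_u v.2)
      have hψ := smul_of_tower_mem _ d (h.ψ_smul_mem_span_u v.2)
      convert add_mem hφ hψ using 1
      simp [add_smul, smul_assoc, algebraMap_smul, add_assoc]
    · intro hv
      have hφ : φ • (v : M) = 0 := h.span_u_le_ker_φ hv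
      have hψ : ψ • (v : M) = 0 := h.span_u_le_ker_ψ hv
      ext
      simp [add_smul, smul_assoc, algebraMap_smul, hφ, hψ]
  have : FiniteDimensional k (span k (range (Sum.elim z u))) :=
    FiniteDimensional.span_of_finite k (finite_range _)
  rw [hlen]
  change Module.length k (N.restrictScalars k) = _
  rw [h.restrictScalars_span_z hB hm, Module.length_eq_finrank,
    finrank_span_eq_card h.linearIndependent]
  simp
  ring

theorem dual_smul_relations (h : IsPreprojectiveFamily k φ ψ z u)
    (hB : span k ({1, φ, ψ} : Set B) = ⊤) (hm : m ≠ 0) {ε : Fin (m + 1) → Module.Dual k M}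
    (hε : ∀ p q, ε p (u q) = if q = p then 1 else 0) {v : M} (hv : v ∈ span B (range z)) :
    (∀ i : Fin m, ε i.succ (ψ • v) = ε i.castSucc (φ • v)) ∧ ε (Fin.last m) (φ • v) = 0 ∧
      ε 0 (ψ • v) = 0 := by
  replace hv : v ∈ span k (range (Sum.elim z u)) := h.restrictScalars_span_z hB hm ▸ hv
  set Lφ := (LinearMap.lsmul B M φ).restrictScalars k
  set Lψ := (LinearMap.lsmul B M ψ).restrictScalars k
  refine ⟨fun i => LinearMap.eqOn_span' (f := ε i.succ ∘ₗ Lψ) (g := ε i.castSucc ∘ₗ Lφ) ?_ hv,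
    LinearMap.eqOn_span' (f := ε (Fin.last m) ∘ₗ Lφ) (g := 0) ?_ hv,
    LinearMap.eqOn_span' (f := ε 0 ∘ₗ Lψ) (g := 0) ?_ hv⟩ <;>
  rintro _ ⟨s | s, rfl⟩ <;>
  simp [Lφ, Lψ, h.φ_smul_z, h.ψ_smul_z, h.φ_smul_u, h.ψ_smul_u, hε, Fin.succ_ne_zero,
    Fin.castSucc_ne_last]

theorem exists_smul_eq_on_u (h : IsPreprojectiveFamily k φ ψ z u)
    (hB : span k ({1, φ, ψ} : Set B) = ⊤) (hm : m ≠ 0) (f : Module.End B (span B (range z))) :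
    ∃ c : k, ∀ j, f ⟨u j, h.u_mem_span_z hm j⟩ = c • ⟨u j, h.u_mem_span_z hm j⟩ := by
  classical
  let uN (j : Fin (m + 1)) : span B (range z) := ⟨u j, h.u_mem_span_z hm j⟩
  let zN (i : Fin m) : span B (range z) := ⟨z i, subset_span (mem_range_self i)⟩
  obtain ⟨ε, hε⟩ := h.linearIndependent_u.exists_dual
  have hf_cast (i : Fin m) : (f (uN i.castSucc) : M) = φ • (f (zN i) : M) := by
    rw [← coe_smul, ← map_smul]
    exact congrArg _ (congrArg f (Subtype.ext (h.φ_smul_z i).symm))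
  have hf_succ (i : Fin m) : (f (uN i.succ) : M) = ψ • (f (zN i) : M) := by
    rw [← coe_smul, ← map_smul]
    exact congrArg _ (congrArg f (Subtype.ext (h.ψ_smul_z i).symm))
  have hrel (i : Fin m) := h.dual_smul_relations hB hm hε (f (zN i)).2
  -- the matrix of `f` on the socle, in the basis `u`
  set S : Fin (m + 1) → Fin (m + 1) → k := fun j p => ε p (f (uN j))
  have hS := Fin.eq_ite_of_shift_invariant S
    (fun i i' => by simp only [S, hf_cast, hf_succ, (hrel i).1])
    (fun i => by simp only [S, hf_cast, (hrel i).2.1])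
    (fun i => by simp only [S, hf_succ, (hrel i).2.2])
  refine ⟨S 0 0, fun j => Subtype.ext ?_⟩
  change (f (uN j) : M) = S 0 0 • u j
  have hφf : φ • (f (uN j) : M) = 0 := by
    rw [← coe_smul, ← map_smul, show φ • uN j = 0 from Subtype.ext (h.φ_smul_u j), map_zero,
      ZeroMemClass.coe_zero]
  have hfu := h.mem_span_u_of_φ_smul_eq_zero (h.restrictScalars_span_z hB hm ▸ (f (uN j)).2) hφf
  rw [eq_sum_dual_smul_of_mem_span hε hfu]
  change ∑ p, S j p • u p = _
  simp only [hS j, ite_smul, zero_smul, Finset.sum_ite_eq, Finset.mem_univ, if_true]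

theorem indec_span_z (h : IsPreprojectiveFamily k φ ψ z u) (hB : span k ({1, φ, ψ} : Set B) = ⊤)
    (hm : m ≠ 0) : Indec B (span B (range z)) := by
  have : Nontrivial (span B (range z)) := ⟨⟨u 0, h.u_mem_span_z hm 0⟩, 0,
    fun h0 => h.linearIndependent_u.ne_zero 0 (congrArg Subtype.val h0)⟩
  refine indec_of_forall_isIdempotentElem fun f hf => ?_
  obtain ⟨c, hc⟩ := h.exists_smul_eq_on_u hB hm f
  set g := f - algebraMap k _ c
  -- `g` vanishes on the `u j`, hence on the kernel of `φ`, which contains `g N` and `φ N`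
  have hg_ker (v : span B (range z)) (hv : φ • v = 0) : g v = 0 := by
    have hvu : (v : M) ∈ span k (range u) := h.mem_span_u_of_φ_smul_eq_zero
      (h.restrictScalars_span_z hB hm ▸ v.2) (congrArg Subtype.val hv)
    have hle : span k (range u) ≤
        ((LinearMap.ker g).map (span B (range z)).subtype).restrictScalars k :=
      span_le.2 <| range_subset_iff.2 fun j => ⟨⟨u j, h.u_mem_span_z hm j⟩, by simp [g, hc], rfl⟩
    obtain ⟨w, hw, hwv⟩ := hle hvu
    obtain rfl := Subtype.ext hwv
    exact hw
  have hφφ (v : span B (range z)) : φ • φ • v = 0 :=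
    Subtype.ext (h.span_u_le_ker_φ (h.φ_smul_mem_span_u v.2))
  have hgg : g * g = 0 :=
    LinearMap.ext fun v => hg_ker _ (by rw [← map_smul]; exact hg_ker _ (hφφ v))
  rw [show f = algebraMap k _ c + g by simp [g]] at hf ⊢
  exact hf.eq_zero_or_one_of_algebraMap_add hgg

end IsPreprojectiveFamily

/-- Let `B = k⟨φ,ψ⟩/(φ²,ψ²,φψ,ψφ)` be the 3-dimensional local algebra with basis
`1, φ, ψ` and square-zero radical, and `V` a `B`-module with elements `x, y, u`
satisfying `φx = 0`, `ψx = φy = u ≠ 0`, `ψy = 0`.  In `V^n` put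
`z_i = y_(i) + x_(i+1)` for `1 ≤ i ≤ n−1`.  Then `N = Σᵢ B·z_i ⊆ V^n` has `k`-basis
`{z₁,…,z_{n−1}, u_(1),…,u_(n)}`, its socle is `Σᵢ k·u_(i)` (the span of the `u_(i)`),
and `N` is an indecomposable `B`-module of length `2n−1`. -/
theorem preprojective_submodule_structure
    (k : Type*) [Field k] (B : Type*) [CommRing B] [Algebra k B]
    (φ ψ : B)
    (hbasis : LinearIndependent k ![(1 : B), φ, ψ] ∧
      Submodule.span k ({1, φ, ψ} : Set B) = ⊤)
    (hφφ : φ * φ = 0) (hφψ : φ * ψ = 0)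
    (V : Type*) [AddCommGroup V] [Module B V] [Module k V] [IsScalarTower k B V]
    (x y u : V)
    (hx : φ • x = 0) (hu₁ : ψ • x = u) (hu₂ : φ • y = u) (hu : u ≠ 0) (hy : ψ • y = 0)
    (n : ℕ) (hn : 2 ≤ n)
    (z : Fin (n - 1) → (Fin n → V))
    (hz : ∀ i : Fin (n - 1),
      z i = Pi.single (Fin.castLE (Nat.sub_le n 1) i) y +
            Pi.single (⟨i.1 + 1, by omega⟩ : Fin n) x)
    (usingle : Fin n → (Fin n → V))
    (husingle : ∀ i, usingle i = Pi.single i u)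
    (N : Submodule B (Fin n → V)) (hN : N = Submodule.span B (Set.range z)) :
    -- k-basis {z₁,…,z_{n−1}, u_(1),…,u_(n)}
    (LinearIndependent k (Sum.elim z usingle) ∧
      Submodule.restrictScalars k N = Submodule.span k (Set.range (Sum.elim z usingle))) ∧
    -- socle of N is Σᵢ k·u_(i)
    sSup {S : Submodule B (Fin n → V) | IsAtom S ∧ S ≤ N} =
      Submodule.span B (Set.range usingle) ∧
    -- N is indecomposable of length 2n−1
    Indec B N ∧ moduleLength B N = ((2 * n - 1 : ℕ) : ℕ∞) := by
  obtain ⟨m, rfl⟩ : ∃ m, n = m + 1 := ⟨n - 1, by omega⟩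
  have hm : m ≠ 0 := by omega
  subst hN
  have hφu : φ • u = 0 := by rw [← hu₂, smul_smul, hφφ, zero_smul]
  have hψu : ψ • u = 0 := by rw [← hu₂, smul_smul, mul_comm, hφψ, zero_smul]
  have h : IsPreprojectiveFamily k φ ψ (m := m) z usingle := by
    refine ⟨fun i => ?_, fun i => ?_, fun j => ?_, fun j => ?_, ?_⟩
    · rw [hz, husingle, smul_add, ← Pi.single_smul, ← Pi.single_smul, hu₂, hx, Pi.single_zero,
        add_zero]
      rfl
    · rw [hz, husingle, smul_add, ← Pi.single_smul, ← Pi.single_smul, hu₁, hy, Pi.single_zero,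
        zero_add]
      rfl
    · rw [husingle, ← Pi.single_smul, hφu, Pi.single_zero]
    · rw [husingle, ← Pi.single_smul, hψu, Pi.single_zero]
    · rw [funext husingle]
      exact Pi.linearIndependent_single_of_ne_zero fun _ => hu
  refine ⟨⟨h.linearIndependent, h.restrictScalars_span_z hbasis.2 hm⟩,
    h.sSup_isAtom_le_span_z hbasis.2 hm, h.indec_span_z hbasis.2 hm, ?_⟩
  rw [moduleLength, ← Module.coe_length, h.length_span_z hbasis.2 hm]
  norm_cast
end

section
/- Over the Kronecker algebra kQ with char k ≠ 2, the module W(2) (generated by x_(1), z₁ = y_(1) + x_(2), and y_(2) inside V² as above) contains two distinct 2-dimensional submodules U = kQ·z and U' = kQ·z' with z = x_(1)+y_(1)+x_(2)+y_(2) and z' = x_(1)−y_(1)−x_(2)+y_(2), satisfying U ∩ U' = 0; hence U ⊕ U' is a decomposable submodule of W(2) containing M(1) = kQ·z₁ (generated by (1/2)(z − z')), so the inclusion M(1) ⊂ W(2) is not uniform. -/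
section Kronecker

variable (K : Type*) [Field K]

/-- The first arrow of the Kronecker representation `V² = V_(1) ⊕ V_(2)`, where the
vertex-`a` space has basis `x₁, y₁, x₂, y₂` (coordinates `0,1,2,3`) and the
vertex-`b` space has basis `u₁, u₂`:  `α` sends `y_i ↦ u_i` and `x_i ↦ 0`. -/
noncomputable def kronAlpha : (Fin 4 → K) →ₗ[K] (Fin 2 → K) :=
  Matrix.mulVecLin !![0, 1, 0, 0; 0, 0, 0, 1]

/-- The second arrow `β`: it sends `x_i ↦ u_i` and `y_i ↦ 0`. -/
noncomputable def kronBeta : (Fin 4 → K) →ₗ[K] (Fin 2 → K) :=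
  Matrix.mulVecLin !![1, 0, 0, 0; 0, 0, 1, 0]

/-- A subrepresentation of `V²` is a pair of subspaces stable under both arrows. -/
def IsSubrep (Sa : Submodule K (Fin 4 → K)) (Sb : Submodule K (Fin 2 → K)) : Prop :=
  Sa.map (kronAlpha K) ≤ Sb ∧ Sa.map (kronBeta K) ≤ Sb

/-- Indecomposability of a subrepresentation `(Sa, Sb)`. -/
def IndecSubrep (Sa : Submodule K (Fin 4 → K)) (Sb : Submodule K (Fin 2 → K)) : Prop :=
  ¬ (Sa = ⊥ ∧ Sb = ⊥) ∧
  ∀ Pa Qa : Submodule K (Fin 4 → K), ∀ Pb Qb : Submodule K (Fin 2 → K),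
    IsSubrep K Pa Pb → IsSubrep K Qa Qb →
    Pa ⊔ Qa = Sa → Pb ⊔ Qb = Sb → Pa ⊓ Qa = ⊥ → Pb ⊓ Qb = ⊥ →
    (Pa = ⊥ ∧ Pb = ⊥) ∨ (Qa = ⊥ ∧ Qb = ⊥)

end Kronecker

/-!
The vectors `z = x₁ + y₁ + x₂ + y₂` and `z' = x₁ - y₁ - x₂ + y₂` each span, together with
`αz = βz = u₁ + u₂`, resp. `-αz' = βz' = u₁ - u₂`, a subrepresentation of dimension vector
`(1, 1)`. When `2 ≠ 0` the images `(1, 1)` and `(1, -1)` under `β` are linearly independent,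
so `U ∩ U' = 0` and `U ⊕ U'` fills the vertex `b`. As `z₁ = (z - z') / 2` and `z, z'` lie in
`W(2)`, the decomposable `U ⊕ U'` sits between `M(1)` and `W(2)`.
-/

open Submodule

section Pair

variable {R M : Type*} [Ring R] [AddCommGroup M] [Module R M] {x y : M}

theorem LinearIndependent.pair_left_ne_zero [Nontrivial R] (h : LinearIndependent R ![x, y]) :
    x ≠ 0 :=
  h.ne_zero 0

theorem LinearIndependent.pair_right_ne_zero [Nontrivial R] (h : LinearIndependent R ![x, y]) :
    y ≠ 0 :=
  h.ne_zero 1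

theorem LinearIndependent.disjoint_span_singleton_pair (h : LinearIndependent R ![x, y]) :
    Disjoint (R ∙ x) (R ∙ y) := by
  simpa using h.disjoint_span_image (s := {0}) (t := {1}) (by simp)

end Pair

theorem LinearIndependent.sup_span_singleton_pair_eq_top {K V : Type*} [DivisionRing K]
    [AddCommGroup V] [Module K V] {x y : V} (h : LinearIndependent K ![x, y])
    (hV : Module.finrank K V = 2) : (K ∙ x) ⊔ (K ∙ y) = ⊤ := by
  rw [← span_insert, ← Matrix.range_cons_cons_empty x y ![]]
  exact h.span_eq_top_of_card_eq_finrank (by simp [hV])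

section Kronecker

variable {K : Type*} [Field K]

theorem kronAlpha_apply (v : Fin 4 → K) : kronAlpha K v = ![v 1, v 3] := by
  ext i; fin_cases i <;> simp [kronAlpha, Matrix.mulVec, dotProduct, Fin.sum_univ_four]

theorem kronBeta_apply (v : Fin 4 → K) : kronBeta K v = ![v 0, v 2] := by
  ext i; fin_cases i <;> simp [kronBeta, Matrix.mulVec, dotProduct, Fin.sum_univ_four]

theorem isSubrep_span_singleton_iff {v : Fin 4 → K} {Sb : Submodule K (Fin 2 → K)} :
    IsSubrep K (K ∙ v) Sb ↔ ![v 1, v 3] ∈ Sb ∧ ![v 0, v 2] ∈ Sb := by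
  simp only [IsSubrep, map_span, Set.image_singleton, span_singleton_le_iff_mem,
    kronAlpha_apply, kronBeta_apply]

theorem isSubrep_top (Sa : Submodule K (Fin 4 → K)) : IsSubrep K Sa ⊤ :=
  ⟨le_top, le_top⟩

theorem IsSubrep.sup {Pa Qa : Submodule K (Fin 4 → K)} {Pb Qb : Submodule K (Fin 2 → K)}
    (hP : IsSubrep K Pa Pb) (hQ : IsSubrep K Qa Qb) : IsSubrep K (Pa ⊔ Qa) (Pb ⊔ Qb) := by
  simp only [IsSubrep, Submodule.map_sup]
  exact ⟨sup_le_sup hP.1 hQ.1, sup_le_sup hP.2 hQ.2⟩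

theorem not_indecSubrep_sup {Pa Qa : Submodule K (Fin 4 → K)} {Pb Qb : Submodule K (Fin 2 → K)}
    (hP : IsSubrep K Pa Pb) (hQ : IsSubrep K Qa Qb) (ha : Disjoint Pa Qa) (hb : Disjoint Pb Qb)
    (hP₀ : ¬ (Pa = ⊥ ∧ Pb = ⊥)) (hQ₀ : ¬ (Qa = ⊥ ∧ Qb = ⊥)) :
    ¬ IndecSubrep K (Pa ⊔ Qa) (Pb ⊔ Qb) := fun ⟨_, hindec⟩ ↦
  (hindec Pa Qa Pb Qb hP hQ rfl rfl ha.eq_bot hb.eq_bot).elim hP₀ hQ₀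

theorem linearIndependent_one_one_one_neg_one (hchar : (2 : K) ≠ 0) :
    LinearIndependent K ![![(1 : K), 1], ![1, -1]] := by
  refine LinearIndependent.pair_iff.mpr fun s t hst ↦ ?_
  have h₀ : s + t = 0 := by simpa using congrFun hst 0
  have h₁ : s - t = 0 := by simpa [sub_eq_add_neg] using congrFun hst 1
  have hs : 2 * s = 0 := by linear_combination h₀ + h₁
  have hs : s = 0 := (mul_eq_zero.mp hs).resolve_left hchar
  exact ⟨hs, by linear_combination h₀ - hs⟩

theorem linearIndependent_z_z' (hchar : (2 : K) ≠ 0) :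
    LinearIndependent K ![![(1 : K), 1, 1, 1], ![1, -1, -1, 1]] := by
  refine LinearIndependent.of_comp (kronBeta K) ?_
  convert linearIndependent_one_one_one_neg_one hchar using 1
  ext i j; fin_cases i <;> fin_cases j <;> simp [kronBeta_apply]

theorem span_z₁_le_sup_span_z_span_z' (hchar : (2 : K) ≠ 0) :
    (K ∙ (![0, 1, 1, 0] : Fin 4 → K)) ≤ (K ∙ ![1, 1, 1, 1]) ⊔ (K ∙ ![1, -1, -1, 1]) := by
  have h2z₁ : (2 : K) • (![0, 1, 1, 0] : Fin 4 → K) = ![1, 1, 1, 1] - ![1, -1, -1, 1] := by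
    ext i; fin_cases i <;> norm_num
  rw [span_singleton_le_iff_mem, ← smul_mem_iff _ hchar, h2z₁]
  exact sub_mem (mem_sup_left (mem_span_singleton_self _))
    (mem_sup_right (mem_span_singleton_self _))

theorem sup_span_z_span_z'_le_W :
    (K ∙ (![1, 1, 1, 1] : Fin 4 → K)) ⊔ (K ∙ ![1, -1, -1, 1]) ≤
      span K {![1, 0, 0, 0], ![0, 1, 1, 0], ![0, 0, 0, 1]} := by
  have hz : (![1, 1, 1, 1] : Fin 4 → K) = ![1, 0, 0, 0] + ![0, 1, 1, 0] + ![0, 0, 0, 1] := by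
    ext i; fin_cases i <;> simp
  have hz' : (![1, -1, -1, 1] : Fin 4 → K) = ![1, 0, 0, 0] - ![0, 1, 1, 0] + ![0, 0, 0, 1] := by
    ext i; fin_cases i <;> simp
  rw [sup_le_iff, span_singleton_le_iff_mem, span_singleton_le_iff_mem, hz, hz']
  constructor <;>
    [refine add_mem (add_mem ?_ ?_) ?_; refine add_mem (sub_mem ?_ ?_) ?_] <;>
    exact subset_span (by simp)

end Kronecker

open Submodule in
/-- Over the Kronecker algebra with `char k ≠ 2`, the module `W(2)` (generated by
`x₁`, `z₁ = y₁ + x₂` and `y₂` in `V²`) contains the distinct 2-dimensional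
submodules `U = kQ·z` and `U' = kQ·z'` with `z = x₁+y₁+x₂+y₂`, `z' = x₁−y₁−x₂+y₂`,
satisfying `U ∩ U' = 0`; hence `U ⊕ U'` is a decomposable submodule of `W(2)`
containing `M(1) = kQ·z₁`, so the inclusion `M(1) ⊂ W(2)` is not uniform. -/
theorem kronecker_not_uniform
    (K : Type*) [Field K] (hchar : (2 : K) ≠ 0)
    (Ua : Submodule K (Fin 4 → K)) (hUa : Ua = span K {![1, 1, 1, 1]})
    (Ub : Submodule K (Fin 2 → K)) (hUb : Ub = span K {![(1 : K), 1]})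
    (U'a : Submodule K (Fin 4 → K)) (hU'a : U'a = span K {![1, -1, -1, 1]})
    (U'b : Submodule K (Fin 2 → K)) (hU'b : U'b = span K {![(1 : K), -1]})
    (Ma : Submodule K (Fin 4 → K)) (hMa : Ma = span K {![0, 1, 1, 0]})
    (Mb : Submodule K (Fin 2 → K)) (hMb : Mb = ⊤)
    (Wa : Submodule K (Fin 4 → K))
    (hWa : Wa = span K {![1, 0, 0, 0], ![0, 1, 1, 0], ![0, 0, 0, 1]})
    (Wb : Submodule K (Fin 2 → K)) (hWb : Wb = ⊤) :
    -- U, U', M(1) and W(2) are subrepresentations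
    (IsSubrep K Ua Ub ∧ IsSubrep K U'a U'b ∧ IsSubrep K Ma Mb ∧ IsSubrep K Wa Wb) ∧
    -- U and U' are 2-dimensional and distinct
    (Module.finrank K Ua + Module.finrank K Ub = 2 ∧
      Module.finrank K U'a + Module.finrank K U'b = 2 ∧ (Ua, Ub) ≠ (U'a, U'b)) ∧
    -- U ∩ U' = 0
    (Ua ⊓ U'a = ⊥ ∧ Ub ⊓ U'b = ⊥) ∧
    -- M(1) ⊆ U ⊕ U' ⊆ W(2)
    (Ma ≤ Ua ⊔ U'a ∧ Mb ≤ Ub ⊔ U'b ∧ Ua ⊔ U'a ≤ Wa ∧ Ub ⊔ U'b ≤ Wb) ∧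
    -- U ⊕ U' is decomposable
    ¬ IndecSubrep K (Ua ⊔ U'a) (Ub ⊔ U'b) ∧
    -- the inclusion M(1) ⊂ W(2) is not uniform
    ¬ (∀ Sa : Submodule K (Fin 4 → K), ∀ Sb : Submodule K (Fin 2 → K),
        IsSubrep K Sa Sb → Ma ≤ Sa → Mb ≤ Sb → Sa ≤ Wa → Sb ≤ Wb →
        IndecSubrep K Sa Sb) := by
  subst hUa hUb hU'a hU'b hMa hMb hWa hWb
  have hindepA := linearIndependent_z_z' hchar
  have hindepB := linearIndependent_one_one_one_neg_one hchar
  have hdisjA := hindepA.disjoint_span_singleton_pair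
  have hdisjB := hindepB.disjoint_span_singleton_pair
  have hsupB := hindepB.sup_span_singleton_pair_eq_top (Module.finrank_fin_fun K)
  have hMU := span_z₁_le_sup_span_z_span_z' hchar
  have hU : IsSubrep K (K ∙ ![1, 1, 1, 1]) (K ∙ ![(1 : K), 1]) :=
    isSubrep_span_singleton_iff.mpr (by simp [mem_span_singleton_self])
  have hU' : IsSubrep K (K ∙ ![1, -1, -1, 1]) (K ∙ ![(1 : K), -1]) :=
    isSubrep_span_singleton_iff.mpr (by simp [mem_span_singleton])
  have hUb₀ : (K ∙ ![(1 : K), 1]) ≠ ⊥ := by simp [hindepB.pair_left_ne_zero]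
  have hU'b₀ : (K ∙ ![(1 : K), -1]) ≠ ⊥ := by simp [hindepB.pair_right_ne_zero]
  have hdecomp := not_indecSubrep_sup hU hU' hdisjA hdisjB (by simp [hUb₀]) (by simp [hU'b₀])
  refine ⟨⟨hU, hU', isSubrep_top _, isSubrep_top _⟩,
    ⟨?_, ?_, fun h ↦ hU'b₀ (disjoint_self.mp ((Prod.mk.inj h).2 ▸ hdisjB))⟩,
    ⟨hdisjA.eq_bot, hdisjB.eq_bot⟩, ⟨hMU, hsupB.ge, sup_span_z_span_z'_le_W, le_top⟩, hdecomp,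
    fun h ↦ hdecomp (h _ _ (hU.sup hU') hMU hsupB.ge sup_span_z_span_z'_le_W le_top)⟩
  · rw [finrank_span_singleton hindepA.pair_left_ne_zero,
      finrank_span_singleton hindepB.pair_left_ne_zero]
  · rw [finrank_span_singleton hindepA.pair_right_ne_zero,
      finrank_span_singleton hindepB.pair_right_ne_zero]
end
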